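/- The Klein quartic, the smooth projective plane curve x³y + y³z + z³x = 0 over ℂ (a non-hyperelliptic Riemann surface of genus 3), is isomorphic as a complex algebraic curve to (the smooth model of) the cyclic 7-gonal curve y⁷ = x²(x−1); equivalently, their function fields are isomorphic as field extensions of ℂ. -/

import Mathlib

/-!
We model an irreducible algebraic curve over `ℂ` by its function field: for an affine plane
model cut out by an irreducible polynomial `f ∈ ℂ[x,y]`, the function field is the fraction
field of `ℂ[x,y]/(f)`.  Two irreducible curves over `ℂ` are isomorphic as Riemann surfaces
iff their function fields are isomorphic as `ℂ`-algebras.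
-/

noncomputable section

/-- The function field of the affine plane curve `{f = 0}` (with `x = X 0`, `y = X 1`). -/
abbrev planeCurveFF (f : MvPolynomial (Fin 2) ℂ) :=
  FractionRing (MvPolynomial (Fin 2) ℂ ⧸ Ideal.span {f})

/-- The Klein quartic `x³y + y³z + z³x = 0` in the affine chart `z = 1`. -/
def kleinQuartic : MvPolynomial (Fin 2) ℂ :=
  (MvPolynomial.X 0) ^ 3 * MvPolynomial.X 1 + (MvPolynomial.X 1) ^ 3 + MvPolynomial.X 0

/-- The cyclic `7`-gonal curve `y⁷ = x²(x - 1)`, the affine chart `z = 1` of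
`y⁷ = x²(x - z)z⁴`. -/
def sevenGonalModel : MvPolynomial (Fin 2) ℂ :=
  (MvPolynomial.X 1) ^ 7 - (MvPolynomial.X 0) ^ 2 * (MvPolynomial.X 0 - 1)

/-!
Let `c` be transcendental over `ℂ` and `t` a seventh root of `c³ - c²` in an algebraically
closed field `Ω`. Then `(c, t)` is a generic point of `y⁷ = x²(x - 1)`, and `(1/t, -t²/c)` is a
generic point of the Klein quartic, since `x³y + y³ + x = (c³ - c² - t⁷)/(t c³)` at that point.
Genericity means that the kernel of evaluation is the principal ideal of the curve: each equation
is a monic Eisenstein polynomial in `y` over `ℂ[x]` (at `x`, resp. at `x - 1`) and the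
`x`-coordinate is transcendental. So both function fields embed into `Ω`, with images `ℂ(c, t)`
and `ℂ(1/t, -t²/c)`, and these subfields coincide.
-/

open Polynomial Polynomial.Bivariate

theorem Transcendental.ne_zero {R A : Type*} [CommRing R] [Nontrivial R] [Ring A] [Algebra R A]
    {x : A} (hx : Transcendental R x) : x ≠ 0 :=
  fun h => hx (h ▸ isAlgebraic_zero)

theorem ker_eval₂RingHom_eq_span_of_monic_irreducible {R K : Type*} [CommRing R] [IsDomain R]
    [IsIntegrallyClosed R] [Field K] {φ : R →+* K} (hφ : Function.Injective φ) {p : R[X]}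
    (hmonic : p.Monic) (hirr : Irreducible p) {b : K} (hb : p.eval₂ φ b = 0) :
    RingHom.ker (eval₂RingHom φ b) = Ideal.span {p} := by
  let _ := φ.toAlgebra
  have _ : Module.IsTorsionFree R K := Module.isTorsionFree_iff_algebraMap_injective.mpr hφ
  have hint : IsIntegral R b := ⟨p, hmonic, hb⟩
  have hdvd : minpoly R b ∣ p := minpoly.isIntegrallyClosed_dvd hint hb
  have hmin : minpoly R b = p := eq_of_monic_of_associated (minpoly.monic hint) hmonic
    (associated_of_dvd_dvd hdvd ((minpoly.irreducible hint).dvd_symm hirr hdvd))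
  rw [← hmin, ← minpoly.ker_eval hint]
  rfl

theorem Polynomial.Bivariate.aeval_equivMvPolynomial {k A : Type*} [CommSemiring k]
    [CommSemiring A] [Algebra k A] (a b : A) (p : k[X][Y]) :
    MvPolynomial.aeval ![a, b] (equivMvPolynomial k p) = p.eval₂ (aeval a).toRingHom b := by
  suffices (MvPolynomial.aeval ![a, b]).toRingHom.comp (equivMvPolynomial k).toRingHom =
      eval₂RingHom (aeval a).toRingHom b from congr($this p)
  ext <;> simp

theorem ker_aeval_equivMvPolynomial {k Ω : Type*} [Field k] [Field Ω] [Algebra k Ω] {a b : Ω}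
    (ha : Transcendental k a) {p : k[X][Y]} (hmonic : p.Monic) (hirr : Irreducible p)
    (hp : MvPolynomial.aeval ![a, b] (equivMvPolynomial k p) = 0) :
    RingHom.ker (MvPolynomial.aeval ![a, b]) = Ideal.span {equivMvPolynomial k p} := by
  rw [aeval_equivMvPolynomial] at hp
  have hker := ker_eval₂RingHom_eq_span_of_monic_irreducible
    (transcendental_iff_injective.mp ha) hmonic hirr hp
  ext r
  obtain ⟨q, rfl⟩ := (equivMvPolynomial k).surjective r
  rw [RingHom.mem_ker, aeval_equivMvPolynomial, Ideal.mem_span_singleton, map_dvd_iff,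
    ← Ideal.mem_span_singleton, ← hker, RingHom.mem_ker, coe_eval₂RingHom]

theorem irreducible_X_pow_sub_C_of_prime_dvd {R : Type*} [CommRing R] [IsDomain R] {q a : R}
    (hq : Prime q) (hqa : q ∣ a) (hqa2 : ¬q ^ 2 ∣ a) {n : ℕ} (hn : 0 < n) :
    Irreducible (X ^ n - C a) := by
  have hmonic : (X ^ n - C a : R[X]).Monic := monic_X_pow_sub_C a hn.ne'
  have hdeg : (X ^ n - C a : R[X]).natDegree = n := natDegree_X_pow_sub_C
  have hP : (Ideal.span {q}).IsPrime := (Ideal.span_singleton_prime hq.ne_zero).mpr hq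
  refine (hmonic.isEisensteinAt_of_mem_of_notMem hP.ne_top (fun {m} hm => ?_) ?_).irreducible
    hP hmonic.isPrimitive (by rwa [hdeg])
  · rw [hdeg] at hm
    rcases Nat.eq_zero_or_pos m with rfl | hm0
    · simpa [Ideal.mem_span_singleton, coeff_X_pow, hn.ne] using hqa
    · simp [coeff_X_pow, hm.ne, coeff_C, hm0.ne']
  · simpa [Ideal.span_singleton_pow, Ideal.mem_span_singleton, coeff_X_pow, hn.ne] using hqa2

theorem Ideal.range_kerLiftAlg {R A B : Type*} [CommSemiring R] [CommRing A] [Algebra R A]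
    [Semiring B] [Algebra R B] (f : A →ₐ[R] B) : (Ideal.kerLiftAlg f).range = f.range := by
  ext x
  constructor
  · rintro ⟨q, rfl⟩
    obtain ⟨r, rfl⟩ := Ideal.Quotient.mk_surjective q
    exact ⟨r, (Ideal.kerLiftAlg_mk f r).symm⟩
  · rintro ⟨r, rfl⟩
    exact ⟨_, Ideal.kerLiftAlg_mk f r⟩

theorem nonempty_fractionRing_quotient_algEquiv_adjoin {k A Ω : Type*} [Field k] [CommRing A]
    [Algebra k A] [Field Ω] [Algebra k Ω] (f : A →ₐ[k] Ω) {s : Set Ω}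
    (hs : f.range = Algebra.adjoin k s) {I : Ideal A} (hI : RingHom.ker f = I) :
    Nonempty (FractionRing (A ⧸ I) ≃ₐ[k] IntermediateField.adjoin k s) := by
  subst hI
  have := RingHom.ker_isPrime f
  have hf : Function.Injective (Ideal.kerLiftAlg f) := Ideal.kerLiftAlg_injective f
  let φ := IsFractionRing.liftAlgHom (K := FractionRing (A ⧸ RingHom.ker f)) hf
  have hφ : φ.fieldRange = IntermediateField.adjoin k s :=
    IsFractionRing.liftAlgHom_fieldRange_eq_of_range_eq hf (by rw [Ideal.range_kerLiftAlg, hs])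
  exact ⟨(AlgEquiv.ofInjectiveField φ).trans (Subalgebra.equivOfEq _ _ (by rw [← hφ]; rfl))⟩

theorem adjoin_inv_neg_sq_div_eq {F K : Type*} [Field F] [Field K] [Algebra F K] {c t : K}
    (hc : c ≠ 0) (ht : t ≠ 0) :
    IntermediateField.adjoin F {t⁻¹, -(t ^ 2 / c)} = IntermediateField.adjoin F {c, t} := by
  set E := IntermediateField.adjoin F {c, t}
  set E' := IntermediateField.adjoin F {t⁻¹, -(t ^ 2 / c)}
  have hcE : c ∈ E := IntermediateField.subset_adjoin F _ (by simp)
  have htE : t ∈ E := IntermediateField.subset_adjoin F _ (by simp)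
  have hxE' : t⁻¹ ∈ E' := IntermediateField.subset_adjoin F _ (by simp)
  have hyE' : -(t ^ 2 / c) ∈ E' := IntermediateField.subset_adjoin F _ (by simp)
  have htE' : t ∈ E' := by simpa using E'.inv_mem hxE'
  apply le_antisymm
  · rw [IntermediateField.adjoin_le_iff, Set.insert_subset_iff, Set.singleton_subset_iff]
    exact ⟨E.inv_mem htE, E.neg_mem (E.div_mem (pow_mem htE 2) hcE)⟩
  · rw [IntermediateField.adjoin_le_iff, Set.insert_subset_iff, Set.singleton_subset_iff]
    refine ⟨?_, htE'⟩
    have hc' : c = -(t ^ 2 / -(t ^ 2 / c)) := by field_simp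
    rw [hc']
    exact E'.neg_mem (E'.div_mem (pow_mem htE' 2) hyE')

theorem kleinQuartic_eq_equivMvPolynomial :
    kleinQuartic = equivMvPolynomial ℂ (Y ^ 3 + C (X ^ 3) * Y + C X) := by
  simp only [kleinQuartic, map_add, map_mul, map_pow, equivMvPolynomial_X, equivMvPolynomial_C_X]
  ring

theorem sevenGonalModel_eq_equivMvPolynomial :
    sevenGonalModel = equivMvPolynomial ℂ (Y ^ 7 - C (X ^ 3 - X ^ 2)) := by
  simp only [sevenGonalModel, map_sub, map_pow, equivMvPolynomial_X, equivMvPolynomial_C_X]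
  ring

theorem irreducible_kleinQuartic_bivariate :
    Irreducible (Y ^ 3 + C (X ^ 3) * Y + C X : ℂ[X][Y]) := by
  have hmonic : (Y ^ 3 + C (X ^ 3) * Y + C X : ℂ[X][Y]).Monic := by monicity!
  have hdeg : (Y ^ 3 + C (X ^ 3) * Y + C X : ℂ[X][Y]).natDegree = 3 := by compute_degree!
  have hP : (Ideal.span {(X : ℂ[X])}).IsPrime := (Ideal.span_singleton_prime X_ne_zero).mpr prime_X
  refine (hmonic.isEisensteinAt_of_mem_of_notMem hP.ne_top (fun {m} hm => ?_) ?_).irreducible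
    hP hmonic.isPrimitive (by rw [hdeg]; norm_num)
  · rw [hdeg] at hm
    interval_cases m <;> simp [Ideal.mem_span_singleton, coeff_X, coeff_C, coeff_X_pow, -map_pow]
  · simp [Ideal.span_singleton_pow, Ideal.mem_span_singleton, coeff_X, coeff_C, coeff_X_pow,
      -map_pow, X_pow_dvd_iff]

theorem irreducible_sevenGonalModel_bivariate :
    Irreducible (Y ^ 7 - C (X ^ 3 - X ^ 2) : ℂ[X][Y]) := by
  refine irreducible_X_pow_sub_C_of_prime_dvd (prime_X_sub_C 1) ⟨X ^ 2, by rw [C_1]; ring⟩ ?_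
    (by norm_num)
  rw [show (X ^ 3 - X ^ 2 : ℂ[X]) = (X - C 1) * X ^ 2 by rw [C_1]; ring, pow_two,
    mul_dvd_mul_iff_left (X_sub_C_ne_zero 1), dvd_iff_isRoot]
  simp

section

variable {Ω : Type*} [Field Ω] [Algebra ℂ Ω] {c t : Ω}

theorem ker_aeval_sevenGonalModel (hc : Transcendental ℂ c) (ht : t ^ 7 = c ^ 3 - c ^ 2) :
    RingHom.ker (MvPolynomial.aeval ![c, t]) = Ideal.span {sevenGonalModel} := by
  rw [sevenGonalModel_eq_equivMvPolynomial]
  refine ker_aeval_equivMvPolynomial hc (by monicity!) irreducible_sevenGonalModel_bivariate ?_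
  simp [ht]

theorem transcendental_of_pow_seven_eq (hc : Transcendental ℂ c) (ht : t ^ 7 = c ^ 3 - c ^ 2) :
    Transcendental ℂ t := by
  have hmonic : (X ^ 3 - X ^ 2 : ℂ[X]).Monic := by monicity!
  have hdeg : (X ^ 3 - X ^ 2 : ℂ[X]).natDegree = 3 := by compute_degree!
  have h : Transcendental ℂ (aeval t (X ^ 7 : ℂ[X])) := by
    rw [aeval_X_pow, ht, show c ^ 3 - c ^ 2 = aeval c (X ^ 3 - X ^ 2 : ℂ[X]) by simp]
    exact hc.aeval _ (by rw [hdeg]; norm_num)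
      (mem_nonZeroDivisors_of_ne_zero (by simp [hmonic.leadingCoeff]))
  exact (transcendental_aeval_iff.mp h).1

theorem ker_aeval_kleinQuartic (hc : Transcendental ℂ c) (ht : t ^ 7 = c ^ 3 - c ^ 2) :
    RingHom.ker (MvPolynomial.aeval ![t⁻¹, -(t ^ 2 / c)]) = Ideal.span {kleinQuartic} := by
  have htr := transcendental_of_pow_seven_eq hc ht
  have hc0 := hc.ne_zero
  have ht0 := htr.ne_zero
  rw [kleinQuartic_eq_equivMvPolynomial]
  refine ker_aeval_equivMvPolynomial (fun h => htr (IsAlgebraic.inv_iff.mp h)) (by monicity!)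
    irreducible_kleinQuartic_bivariate ?_
  simp only [map_add, map_mul, map_pow, equivMvPolynomial_X, equivMvPolynomial_C_X,
    MvPolynomial.aeval_X, Matrix.cons_val_zero, Matrix.cons_val_one, Matrix.cons_val_fin_one]
  field_simp
  linear_combination -ht

end

/-- **Klein's quartic as a cyclic 7-gonal curve.** The Klein quartic
`x³y + y³z + z³x = 0` (a non-hyperelliptic Riemann surface of genus `3`) is isomorphic, as a
complex algebraic curve, to the smooth model of the cyclic `7`-gonal curve `y⁷ = x²(x-1)`:
their function fields are isomorphic as `ℂ`-algebras. -/
theorem kleinQuartic_is_seven_gonal :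
    Nonempty (planeCurveFF kleinQuartic ≃ₐ[ℂ] planeCurveFF sevenGonalModel) := by
  let Ω := AlgebraicClosure (RatFunc ℂ)
  let c : Ω := algebraMap (RatFunc ℂ) Ω RatFunc.X
  have hc : Transcendental ℂ c := (transcendental_algebraMap_iff
    (algebraMap (RatFunc ℂ) Ω).injective).mpr RatFunc.transcendental_X
  obtain ⟨t, ht⟩ := IsAlgClosed.exists_pow_nat_eq (c ^ 3 - c ^ 2) (by norm_num : 0 < 7)
  have range_aeval (a b : Ω) : (MvPolynomial.aeval ![a, b]).range = Algebra.adjoin ℂ {a, b} := by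
    rw [← Algebra.adjoin_range_eq_range_aeval, Matrix.range_cons_cons_empty]
  obtain ⟨eKlein⟩ := nonempty_fractionRing_quotient_algEquiv_adjoin _ (range_aeval _ _)
    (ker_aeval_kleinQuartic hc ht)
  obtain ⟨eGonal⟩ := nonempty_fractionRing_quotient_algEquiv_adjoin _ (range_aeval _ _)
    (ker_aeval_sevenGonalModel hc ht)
  have hadjoin := adjoin_inv_neg_sq_div_eq (F := ℂ) hc.ne_zero
    (transcendental_of_pow_seven_eq hc ht).ne_zero
  exact ⟨eKlein.trans ((IntermediateField.equivOfEq hadjoin).trans eGonal.symm)⟩
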